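/- With W₊(x,y) = (((1+ω₊)/(1−ω₊))x, (ω₊/(1+ω₊))y) and ω₊ = ω₊(x,y) as above, fix 0 < a ≤ 1/10 and 0 ≤ b < a, and let D_{b,+} = {(x,y) : 2−a ≤ x ≤ 2−b−10|y|, |y| ≤ a/10}. Then W₊(D_{b,+}) ⊆ D_{b,+}. (The key estimate: the slope α = (−y/ω₊)·(1−ω₊)/(2x(1+ω₊)) of the segment from (x,y) to W₊(x,y) satisfies |α| > 1/10, using |ω₊| ≤ 2|y|, so since sign(Y₊) = sign(y), the image point stays in the triangle.) -/

import Mathlib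

noncomputable def Delta (x y : ℝ) : ℝ := ((x+2)^2 + 8*x^2*y^2) * ((x-2)^2 + 8*x^2*y^2)
noncomputable def r1sq (x y : ℝ) : ℝ := 4 + x^2 + 4*x^2*y^2

noncomputable def omegaP (x y : ℝ) : ℝ := (-4 + x^2 + Real.sqrt (Delta x y)) / (2 * r1sq x y)
noncomputable def omegaM (x y : ℝ) : ℝ := (-4 + x^2 - Real.sqrt (Delta x y)) / (2 * r1sq x y)

noncomputable def Wp (x y : ℝ) : ℝ × ℝ :=
  (((1 + omegaP x y)/(1 - omegaP x y)) * x, (omegaP x y/(1 + omegaP x y)) * y)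

/-- The invariant triangle D_{b,+}. -/
def Dbp (a b : ℝ) : Set (ℝ × ℝ) :=
  {p | 2 - a ≤ p.1 ∧ p.1 ≤ 2 - b - 10*|p.2| ∧ |p.2| ≤ a/10}

/-!
`ω₊` is the nonnegative root of `r₁² ω² = (x² - 4) ω + 4 x² y²`; for `|x| ≤ 2` this forces
`ω₊ ≤ 2|y|`. In the triangle, `W₊` moves a point right by `2ω₊x/(1-ω₊) ≤ 8|y|(1 + O(|y|))`
while `|y|` shrinks by `|y|/(1+ω₊)`, so the segment to the image has slope steeper than `1/10`
in absolute value and the image stays left of the sides `x = 2 - b - 10|y|`.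
-/

lemma delta_eq (x y : ℝ) : Delta x y = (x ^ 2 - 4) ^ 2 + 16 * x ^ 2 * y ^ 2 * r1sq x y := by
  unfold Delta r1sq; ring

lemma four_le_r1sq (x y : ℝ) : 4 ≤ r1sq x y := by
  unfold r1sq; nlinarith [sq_nonneg x, sq_nonneg (x * y)]

lemma delta_nonneg (x y : ℝ) : 0 ≤ Delta x y := by
  unfold Delta; positivity

lemma abs_sub_four_le_sqrt_delta (x y : ℝ) : |x ^ 2 - 4| ≤ √(Delta x y) := by
  refine Real.abs_le_sqrt ?_
  rw [delta_eq]
  nlinarith [four_le_r1sq x y, sq_nonneg (x * y)]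

lemma omegaP_nonneg (x y : ℝ) : 0 ≤ omegaP x y := by
  unfold omegaP
  have := four_le_r1sq x y
  have := abs_sub_four_le_sqrt_delta x y
  exact div_nonneg (by linarith [neg_abs_le (x ^ 2 - 4)]) (by linarith)

lemma r1sq_mul_omegaP_sq (x y : ℝ) :
    r1sq x y * omegaP x y ^ 2 = (x ^ 2 - 4) * omegaP x y + 4 * x ^ 2 * y ^ 2 := by
  have hr : r1sq x y ≠ 0 := by linarith [four_le_r1sq x y]
  have hs : √(Delta x y) ^ 2 = (x ^ 2 - 4) ^ 2 + 16 * x ^ 2 * y ^ 2 * r1sq x y := by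
    rw [Real.sq_sqrt (delta_nonneg x y), delta_eq]
  unfold omegaP
  field_simp
  linear_combination hs

lemma omegaP_le_two_mul_abs {x : ℝ} (y : ℝ) (hx : x ^ 2 ≤ 4) : omegaP x y ≤ 2 * |y| := by
  have hω := omegaP_nonneg x y
  have hsq : 4 * omegaP x y ^ 2 ≤ 4 * (2 * |y|) ^ 2 :=
    calc 4 * omegaP x y ^ 2 ≤ r1sq x y * omegaP x y ^ 2 := by gcongr; exact four_le_r1sq x y
      _ = (x ^ 2 - 4) * omegaP x y + 4 * x ^ 2 * y ^ 2 := r1sq_mul_omegaP_sq x y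
      _ ≤ 4 * x ^ 2 * y ^ 2 :=
        add_le_of_nonpos_left (mul_nonpos_of_nonpos_of_nonneg (by linarith) hω)
      _ ≤ 4 * (2 * |y|) ^ 2 := by rw [mul_pow, sq_abs]; nlinarith [sq_nonneg y]
  exact (pow_le_pow_iff_left₀ hω (by positivity) two_ne_zero).1 (by linarith)

lemma map_mem_Dbp {a b x y ω : ℝ} (ha : a ≤ 1 / 10) (hb : 0 ≤ b) (hp : (x, y) ∈ Dbp a b)
    (hω0 : 0 ≤ ω) (hω : ω ≤ 2 * |y|) :
    ((1 + ω) / (1 - ω) * x, ω / (1 + ω) * y) ∈ Dbp a b := by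
  obtain ⟨hx1, hx2, hy⟩ := hp
  have hy0 := abs_nonneg y
  have hx0 : 0 ≤ x := by linarith
  have hx2' : x ≤ 2 := by linarith
  have hω1 : ω ≤ 1 / 50 := by linarith
  have h1mω : 0 < 1 - ω := by linarith
  have h1pω : 0 < 1 + ω := by linarith
  have hX : (1 + ω) / (1 - ω) * x = x + 2 * ω * x / (1 - ω) := by field_simp; ring
  have hY : |ω / (1 + ω) * y| = |y| - |y| / (1 + ω) := by
    rw [abs_mul, abs_of_nonneg (by positivity : 0 ≤ ω / (1 + ω))]; field_simp; ring
  have hslope : 2 * ω * x / (1 - ω) ≤ 10 * (|y| / (1 + ω)) := by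
    rw [div_le_iff₀ h1mω, mul_div_assoc', div_mul_eq_mul_div, le_div_iff₀ h1pω]
    calc 2 * ω * x * (1 + ω) ≤ 2 * (2 * |y|) * 2 * (1 + ω) := by gcongr
      _ ≤ 10 * |y| * (1 - ω) := by nlinarith
  refine ⟨?_, ?_, ?_⟩ <;> simp only [hX, hY]
  · have : 0 ≤ 2 * ω * x / (1 - ω) := by positivity
    linarith
  · linarith
  · have : 0 ≤ |y| / (1 + ω) := by positivity
    linarith

theorem stmt_18_general (a b : ℝ) (ha : a ≤ 1/10) (hb0 : 0 ≤ b) :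
    ∀ p ∈ Dbp a b, Wp p.1 p.2 ∈ Dbp a b := by
  rintro ⟨x, y⟩ hp
  have hx : x ^ 2 ≤ 4 := by
    obtain ⟨hx1, hx2, -⟩ := hp
    nlinarith [abs_nonneg y]
  exact map_mem_Dbp ha hb0 hp (omegaP_nonneg x y) (omegaP_le_two_mul_abs y hx)

theorem stmt_18 (a b : ℝ) (ha0 : 0 < a) (ha : a ≤ 1/10) (hb0 : 0 ≤ b) (hba : b < a) :
    ∀ p ∈ Dbp a b, Wp p.1 p.2 ∈ Dbp a b :=
  stmt_18_general a b ha hb0
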